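/- arXiv:0908.1613 — 10 statements merged into one kernel-verified Lean document; each statement's English description precedes it below -/
import Mathlib

section
/- The unique Nash equilibrium of the Type II linearly coupled game with utility functions u_n(a) = a_n^{β_n}·(μ − Σ_m τ_m a_m) is given by a_n^{NE} = β_n μ / (τ_n (1 + Σ_{m=1}^N β_m)) for all n. -/
open Finset

/-- The unique Nash equilibrium of the Type II linearly coupled game
(characterized by the first-order conditions) is `a_n = β_n μ / (τ_n (1 + Σ β_m))`. -/
theorem typeII_nash_equilibrium (N : ℕ) (hN : 1 ≤ N)
    (β τ : Fin N → ℝ) (μ : ℝ)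
    (hβ : ∀ n, 0 < β n) (hτ : ∀ n, 0 < τ n) (hμ : 0 < μ)
    (a : Fin N → ℝ) :
    (∀ n, (1 + β n) * τ n * a n + β n * ∑ m ∈ univ.erase n, τ m * a m = β n * μ)
      ↔ (∀ n, a n = β n * μ / (τ n * (1 + ∑ m, β m))) := by
  have hBpos : 0 < 1 + ∑ m, β m := by
    have : 0 ≤ ∑ m, β m := Finset.sum_nonneg fun m _ => (hβ m).le
    linarith
  have hBne : (1 + ∑ m, β m) ≠ 0 := ne_of_gt hBpos
  set S := ∑ m, τ m * a m with hS
  have herase : ∀ n : Fin N, ∑ m ∈ univ.erase n, τ m * a m = S - τ n * a n := by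
    intro n
    rw [hS, ← Finset.sum_erase_add univ _ (Finset.mem_univ n)]
    ring
  constructor
  · intro h
    have key : ∀ n, τ n * a n = β n * (μ - S) := by
      intro n
      have := h n
      rw [herase n] at this
      nlinarith [this]
    have hsum : S = (∑ m, β m) * (μ - S) := by
      rw [hS]
      calc ∑ m, τ m * a m = ∑ m, β m * (μ - S) := by
            exact Finset.sum_congr rfl fun m _ => key m
        _ = (∑ m, β m) * (μ - S) := by rw [← Finset.sum_mul]
    have hms : μ - S = μ / (1 + ∑ m, β m) := by
      field_simp
      nlinarith [hsum]
    intro n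
    have := key n
    rw [hms] at this
    have hτn := (hτ n).ne'
    field_simp at this ⊢
    nlinarith [this]
  · intro h n
    have ha : ∀ m, τ m * a m = β m * μ / (1 + ∑ k, β k) := by
      intro m
      rw [h m]
      field_simp [(hτ m).ne']
    have hSval : S = (∑ m, β m) * μ / (1 + ∑ k, β k) := by
      rw [hS]
      calc ∑ m, τ m * a m = ∑ m, β m * μ / (1 + ∑ k, β k) := by
            exact Finset.sum_congr rfl fun m _ => ha m
        _ = (∑ m, β m) * μ / (1 + ∑ k, β k) := by
            rw [← Finset.sum_div, ← Finset.sum_mul]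
    have h1 : (1 + β n) * τ n * a n + β n * ∑ m ∈ univ.erase n, τ m * a m
        = τ n * a n + β n * S := by rw [herase n]; ring
    rw [h1, ha n, hSval]
    field_simp
end

section
/- For N ≥ 2 and weights ω_n > 0 with Σ ω_n = 1 (so that not all ω_n equal 1), the Nash equilibrium is strictly Pareto inefficient relative to the proportional-fair point: Σ_n ω_n log(u_n(a^{NE})/u_n(a^{PB})) < 0. -/
/-!
Split the budget `μ` into the spendings `τ n * a n` and the residual `μ - ∑ m, τ m * a m`.
Since `u n = a n ^ β n * residual`, the weighted log-utility `∑ ω n * log (u n)` is, up to a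
constant, `∑ q i * log (z i)` over these shares `z`, with weights `q = (1, ω 1 * β 1, …)`.
The proportional-fair shares `z'` are proportional to `q` and the Nash shares `z` to
`(1, β 1, …)`; both add up to `μ`. Hence the gap is a positive multiple of
`∑ z' i * log (z i / z' i)`, which is negative by Gibbs' inequality because `z ≠ z'`
(some `ω n < 1`).
-/

open Finset Real

theorem sum_mul_log_div_neg {ι : Type*} {s : Finset ι} {p q : ι → ℝ}
    (hp : ∀ i ∈ s, 0 < p i) (hq : ∀ i ∈ s, 0 < q i) (hsum : ∑ i ∈ s, q i ≤ ∑ i ∈ s, p i)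
    (hne : ∃ i ∈ s, q i ≠ p i) :
    ∑ i ∈ s, p i * log (q i / p i) < 0 := by
  have hterm : ∀ i ∈ s, p i * log (q i / p i) ≤ q i - p i := fun i hi =>
    calc p i * log (q i / p i) ≤ p i * (q i / p i - 1) :=
          mul_le_mul_of_nonneg_left (log_le_sub_one_of_pos (div_pos (hq i hi) (hp i hi)))
            (hp i hi).le
      _ = q i - p i := by field_simp [(hp i hi).ne']
  obtain ⟨j, hj, hqp⟩ := hne
  have hstrict : p j * log (q j / p j) < q j - p j := by
    have hdiv : q j / p j ≠ 1 := by rwa [ne_eq, div_eq_one_iff_eq (hp j hj).ne']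
    calc p j * log (q j / p j) < p j * (q j / p j - 1) :=
          mul_lt_mul_of_pos_left (log_lt_sub_one_of_pos (div_pos (hq j hj) (hp j hj)) hdiv)
            (hp j hj)
      _ = q j - p j := by field_simp [(hp j hj).ne']
  calc ∑ i ∈ s, p i * log (q i / p i) < ∑ i ∈ s, (q i - p i) :=
        sum_lt_sum hterm ⟨j, hj, hstrict⟩
    _ ≤ 0 := by rw [sum_sub_distrib]; linarith

theorem lt_one_of_sum_eq_one {ι : Type*} [Fintype ι] {ω : ι → ℝ}
    (hcard : 1 < Fintype.card ι) (hω : ∀ i, 0 < ω i) (hsum : ∑ i, ω i = 1) (i : ι) :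
    ω i < 1 := by
  obtain ⟨j, hji⟩ := Fintype.exists_ne_of_one_lt_card hcard i
  rw [← hsum]
  exact single_lt_sum hji (mem_univ i) (mem_univ j) (hω j) fun k _ _ => (hω k).le

theorem log_rpow_mul_div_rpow_mul {x y r s : ℝ} (b : ℝ) (hx : 0 < x) (hy : 0 < y) (hr : 0 < r)
    (hs : 0 < s) : log (x ^ b * r / (y ^ b * s)) = b * log (x / y) + log (r / s) := by
  rw [mul_div_mul_comm, ← div_rpow hx.le hy.le, log_mul (by positivity) (by positivity),
    log_rpow (div_pos hx hy)]

section BudgetShares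

variable {ι : Type*} [Fintype ι]

/-- The index `none` stands for the residual `μ - ∑ m, τ m * a m` left unspent. -/
def budgetShares (τ a : ι → ℝ) (μ : ℝ) (o : Option ι) : ℝ :=
  o.elim (μ - ∑ m, τ m * a m) fun n => τ n * a n

theorem sum_budgetShares (τ a : ι → ℝ) (μ : ℝ) : ∑ o, budgetShares τ a μ o = μ := by
  simp [budgetShares, Fintype.sum_option]

theorem budgetShares_eq_of_proportional {c τ a : ι → ℝ} {μ : ℝ} (hτ : ∀ n, τ n ≠ 0)
    (hC : 1 + ∑ m, c m ≠ 0) (ha : ∀ n, a n = c n * μ / (τ n * (1 + ∑ m, c m)))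
    (o : Option ι) :
    budgetShares τ a μ o = μ / (1 + ∑ m, c m) * o.elim 1 c := by
  have hsome : ∀ n, τ n * a n = μ / (1 + ∑ m, c m) * c n := fun n => by
    rw [ha n]; field_simp [hτ n]
  cases o with
  | none =>
    simp only [budgetShares, Option.elim, hsome, ← mul_sum]
    field_simp
    ring
  | some n => exact hsome n

theorem budgetShares_pos_of_proportional {c τ a : ι → ℝ} {μ : ℝ}
    (hc : ∀ n, 0 < c n) (hτ : ∀ n, 0 < τ n) (hμ : 0 < μ)
    (ha : ∀ n, a n = c n * μ / (τ n * (1 + ∑ m, c m))) (o : Option ι) :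
    0 < budgetShares τ a μ o := by
  have hC : 0 < 1 + ∑ m, c m :=
    add_pos_of_pos_of_nonneg one_pos (sum_nonneg fun m _ => (hc m).le)
  rw [budgetShares_eq_of_proportional (fun n => (hτ n).ne') hC.ne' ha]
  cases o with
  | none => simpa using div_pos hμ hC
  | some n => exact mul_pos (div_pos hμ hC) (hc n)

theorem exists_budgetShares_ne_of_proportional {c c' τ a a' : ι → ℝ} {μ : ℝ}
    (hτ : ∀ n, τ n ≠ 0) (hμ : μ ≠ 0) (hC : 1 + ∑ m, c m ≠ 0) (hC' : 1 + ∑ m, c' m ≠ 0)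
    (ha : ∀ n, a n = c n * μ / (τ n * (1 + ∑ m, c m)))
    (ha' : ∀ n, a' n = c' n * μ / (τ n * (1 + ∑ m, c' m))) {n : ι} (hcn : c n ≠ c' n) :
    ∃ o, budgetShares τ a μ o ≠ budgetShares τ a' μ o := by
  by_cases hres : budgetShares τ a μ none = budgetShares τ a' μ none
  · refine ⟨some n, ?_⟩
    simp only [budgetShares_eq_of_proportional hτ hC ha,
      budgetShares_eq_of_proportional hτ hC' ha', Option.elim, mul_one] at hres ⊢
    rwa [hres, ne_eq, mul_right_inj' (div_ne_zero hμ hC')]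
  · exact ⟨none, hres⟩

theorem sum_mul_log_utility_div {β τ ω : ι → ℝ} {μ : ℝ}
    (hτ : ∀ n, 0 < τ n) (hsum : ∑ n, ω n = 1) {u : (ι → ℝ) → ι → ℝ}
    (hu : ∀ a n, u a n = a n ^ β n * (μ - ∑ m, τ m * a m)) {a a' : ι → ℝ}
    (ha : ∀ o, 0 < budgetShares τ a μ o) (ha' : ∀ o, 0 < budgetShares τ a' μ o) :
    ∑ n, ω n * log (u a n / u a' n) =
      ∑ o, o.elim 1 (fun n => ω n * β n) *
        log (budgetShares τ a μ o / budgetShares τ a' μ o) := by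
  have hpos : ∀ {a : ι → ℝ}, (∀ o, 0 < budgetShares τ a μ o) → ∀ n, 0 < a n :=
    fun ha n => pos_of_mul_pos_right (ha (some n)) (hτ n).le
  have hres : ∀ {a : ι → ℝ}, (∀ o, 0 < budgetShares τ a μ o) → 0 < μ - ∑ m, τ m * a m :=
    fun ha => ha none
  have hterm : ∀ n, ω n * log (u a n / u a' n) =
      ω n * β n * log (τ n * a n / (τ n * a' n)) +
        ω n * log ((μ - ∑ m, τ m * a m) / (μ - ∑ m, τ m * a' m)) := fun n => by
    rw [hu, hu, log_rpow_mul_div_rpow_mul _ (hpos ha n) (hpos ha' n) (hres ha) (hres ha'),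
      mul_div_mul_left _ _ (hτ n).ne']
    ring
  simp only [hterm, sum_add_distrib, ← sum_mul, hsum, Fintype.sum_option, budgetShares,
    Option.elim]
  ring

end BudgetShares

/-- For N ≥ 2 and positive weights summing to one, the Nash equilibrium is
strictly Pareto inefficient: the weighted log-utility gap is strictly negative. -/
theorem typeII_nash_inefficient (N : ℕ) (hN : 2 ≤ N)
    (β τ ω : Fin N → ℝ) (μ : ℝ)
    (hβ : ∀ n, 0 < β n) (hτ : ∀ n, 0 < τ n) (hω : ∀ n, 0 < ω n) (hμ : 0 < μ)
    (hsum : ∑ n, ω n = 1)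
    (u : (Fin N → ℝ) → Fin N → ℝ)
    (hu : ∀ a n, u a n = Real.rpow (a n) (β n) * (μ - ∑ m, τ m * a m))
    (aNE aPB : Fin N → ℝ)
    (hNE : ∀ n, aNE n = β n * μ / (τ n * (1 + ∑ m, β m)))
    (hPB : ∀ n, aPB n = ω n * β n * μ / (τ n * (1 + ∑ m, ω m * β m))) :
    ∑ n, ω n * Real.log (u aNE n / u aPB n) < 0 := by
  have hωβ : ∀ n, 0 < ω n * β n := fun n => mul_pos (hω n) (hβ n)
  have hB : 0 < 1 + ∑ m, β m := add_pos_of_pos_of_nonneg one_pos (sum_nonneg fun m _ => (hβ m).le)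
  have hS : 0 < 1 + ∑ m, ω m * β m :=
    add_pos_of_pos_of_nonneg one_pos (sum_nonneg fun m _ => (hωβ m).le)
  have hNEpos := budgetShares_pos_of_proportional hβ hτ hμ hNE
  have hPBpos := budgetShares_pos_of_proportional hωβ hτ hμ hPB
  have hω0 : ω ⟨0, by omega⟩ < 1 := lt_one_of_sum_eq_one (by simp; omega) hω hsum _
  obtain ⟨o, hne⟩ := exists_budgetShares_ne_of_proportional (fun n => (hτ n).ne') hμ.ne'
    hB.ne' hS.ne' hNE hPB (n := ⟨0, by omega⟩)
    fun h => hω0.ne ((mul_eq_right₀ (hβ _).ne').1 h.symm)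
  have hgibbs := sum_mul_log_div_neg (fun o _ => hPBpos o) (fun o _ => hNEpos o)
    (by rw [sum_budgetShares, sum_budgetShares]) ⟨o, mem_univ o, hne⟩
  rw [sum_mul_log_utility_div hτ hsum hu hNEpos hPBpos]
  simp only [budgetShares_eq_of_proportional (fun n => (hτ n).ne') hS.ne' hPB, mul_assoc,
    ← mul_sum] at hgibbs ⊢
  exact neg_of_mul_neg_right hgibbs (div_pos hμ hS).le
end

section
/- The price of anarchy is lower bounded: Σ_n ω_n log(u_n(a^{NE})/u_n(a^{PB})) > (1 + Σ_n ω_n β_n)·log[(1 + Σ_n ω_n β_n)^2 / ((1 + Σ_n ω_n^2 β_n)(1 + Σ_n β_n))]. -/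
/-!
With `S = ∑ ω β`, `T = ∑ ω² β`, `B = ∑ β`, both budget residuals `μ - ∑ τ a` are explicit
and `∑ ω log (u(a^NE)/u(a^PB)) = (1 + S) (log (1 + S) - log (1 + B)) - ∑ ω β log ω`, so the
claim reduces to `∑ ω β log ω < (1 + S) (log (1 + T) - log (1 + S))`. This is Jensen's
inequality for `log` with weights `ω n β n` at the points `ω n` and weight `1` at the point
`1`; it is strict because `N ≥ 2` forces every `ω n < 1`.
-/

open Finset

theorem one_add_sum_pos {ι : Type*} [Fintype ι] {w : ι → ℝ} (hw : ∀ i, 0 ≤ w i) :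
    0 < 1 + ∑ i, w i :=
  add_pos_of_pos_of_nonneg one_pos (sum_nonneg fun i _ => hw i)

theorem sum_mul_log_lt_of_exists_ne_one {ι : Type*} [Fintype ι] (w x : ι → ℝ)
    (hw : ∀ i, 0 < w i) (hx : ∀ i, 0 < x i) (hx₁ : ∃ i, x i ≠ 1) :
    ∑ i, w i * Real.log (x i) <
      (1 + ∑ i, w i) * (Real.log (1 + ∑ i, w i * x i) - Real.log (1 + ∑ i, w i)) := by
  have hW : 0 < 1 + ∑ i, w i := one_add_sum_pos fun i => (hw i).le
  have hWx : 0 < 1 + ∑ i, w i * x i := one_add_sum_pos fun i => (mul_pos (hw i) (hx i)).le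
  -- `none` is the extra point `1`, of weight `1`.
  have hjensen := strictConcaveOn_log_Ioi.lt_map_sum (t := univ)
    (w := fun o : Option ι => o.elim 1 w / (1 + ∑ i, w i)) (p := fun o => o.elim 1 x)
    (fun o _ => by cases o <;> simp [hW, hw])
    (by simp [Fintype.sum_option, ← sum_div, hW.ne'])
    (fun o _ => by cases o <;> simp [hx])
    (by obtain ⟨i, hi⟩ := hx₁; exact ⟨some i, mem_univ _, none, mem_univ _, hi⟩)
  simp only [Fintype.sum_option, Option.elim, smul_eq_mul, Real.log_one, mul_zero, mul_one,
    zero_add, div_mul_eq_mul_div, ← sum_div] at hjensen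
  rwa [Real.log_div hWx.ne' hW.ne', div_lt_iff₀' hW] at hjensen

theorem lt_one_of_sum_eq_one_s5 {ι : Type*} [Fintype ι] [Nontrivial ι] {w : ι → ℝ}
    (hw : ∀ i, 0 < w i) (hsum : ∑ i, w i = 1) (i : ι) : w i < 1 := by
  obtain ⟨j, hj⟩ := exists_ne i
  exact hsum ▸ single_lt_sum hj (mem_univ i) (mem_univ j) (hw j) fun k _ _ => (hw k).le

section TypeII

variable {ι : Type*} [Fintype ι] {β τ : ι → ℝ} {μ : ℝ}

theorem sub_sum_mul_eq_of_eq_div (c a : ι → ℝ) (hτ : ∀ n, τ n ≠ 0)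
    (hc : 1 + ∑ m, c m ≠ 0) (ha : ∀ n, a n = c n * μ / (τ n * (1 + ∑ m, c m))) :
    μ - ∑ m, τ m * a m = μ / (1 + ∑ m, c m) := by
  have hterm : ∀ m, τ m * a m = c m * (μ / (1 + ∑ m, c m)) := fun m => by
    rw [ha m]; field_simp [hτ m]
  simp only [hterm, ← sum_mul]
  field_simp
  ring

theorem utility_ratio_eq {ω : ι → ℝ} (hβ : ∀ n, 0 < β n) (hτ : ∀ n, 0 < τ n)
    (hω : ∀ n, 0 < ω n) (hμ : 0 < μ)
    (u : (ι → ℝ) → ι → ℝ)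
    (hu : ∀ a n, u a n = Real.rpow (a n) (β n) * (μ - ∑ m, τ m * a m))
    (aNE aPB : ι → ℝ)
    (hNE : ∀ n, aNE n = β n * μ / (τ n * (1 + ∑ m, β m)))
    (hPB : ∀ n, aPB n = ω n * β n * μ / (τ n * (1 + ∑ m, ω m * β m))) (n : ι) :
    u aNE n / u aPB n =
      ((1 + ∑ m, ω m * β m) / (ω n * (1 + ∑ m, β m))) ^ β n *
        ((1 + ∑ m, ω m * β m) / (1 + ∑ m, β m)) := by
  have hB : 0 < 1 + ∑ m, β m := one_add_sum_pos fun m => (hβ m).le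
  have hS : 0 < 1 + ∑ m, ω m * β m :=
    one_add_sum_pos fun m => (mul_pos (hω m) (hβ m)).le
  have hτ₀ : ∀ n, τ n ≠ 0 := fun n => (hτ n).ne'
  rw [hu, hu, sub_sum_mul_eq_of_eq_div β aNE hτ₀ hB.ne' hNE,
    sub_sum_mul_eq_of_eq_div (fun m => ω m * β m) aPB hτ₀ hS.ne' hPB, Real.rpow_eq_pow,
    Real.rpow_eq_pow]
  have hprofile : aNE n = (1 + ∑ m, ω m * β m) / (ω n * (1 + ∑ m, β m)) * aPB n := by
    rw [hNE, hPB]; field_simp [hτ₀ n, (hω n).ne']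
  have haPB : 0 < aPB n := by rw [hPB]; have := hτ n; have := hβ n; have := hω n; positivity
  rw [hprofile, Real.mul_rpow (by have := hω n; positivity) haPB.le]
  have := Real.rpow_pos_of_pos haPB (β n)
  field_simp

theorem log_utility_ratio {ω : ι → ℝ} (hβ : ∀ n, 0 < β n) (hτ : ∀ n, 0 < τ n)
    (hω : ∀ n, 0 < ω n) (hμ : 0 < μ)
    (u : (ι → ℝ) → ι → ℝ)
    (hu : ∀ a n, u a n = Real.rpow (a n) (β n) * (μ - ∑ m, τ m * a m))
    (aNE aPB : ι → ℝ)
    (hNE : ∀ n, aNE n = β n * μ / (τ n * (1 + ∑ m, β m)))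
    (hPB : ∀ n, aPB n = ω n * β n * μ / (τ n * (1 + ∑ m, ω m * β m))) (n : ι) :
    Real.log (u aNE n / u aPB n) =
      β n * (Real.log (1 + ∑ m, ω m * β m) - Real.log (ω n) - Real.log (1 + ∑ m, β m)) +
        (Real.log (1 + ∑ m, ω m * β m) - Real.log (1 + ∑ m, β m)) := by
  have hB : 0 < 1 + ∑ m, β m := one_add_sum_pos fun m => (hβ m).le
  have hS : 0 < 1 + ∑ m, ω m * β m :=
    one_add_sum_pos fun m => (mul_pos (hω m) (hβ m)).le
  have hωB := mul_pos (hω n) hB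
  rw [utility_ratio_eq hβ hτ hω hμ u hu aNE aPB hNE hPB,
    Real.log_mul (Real.rpow_pos_of_pos (div_pos hS hωB) _).ne' (div_pos hS hB).ne',
    Real.log_rpow (div_pos hS hωB), Real.log_div hS.ne' hωB.ne',
    Real.log_mul (hω n).ne' hB.ne', Real.log_div hS.ne' hB.ne']
  ring

end TypeII

/-- Lower bound on the price of anarchy in Type II games. -/
theorem typeII_poa_lower_bound (N : ℕ) (hN : 2 ≤ N)
    (β τ ω : Fin N → ℝ) (μ : ℝ)
    (hβ : ∀ n, 0 < β n) (hτ : ∀ n, 0 < τ n) (hω : ∀ n, 0 < ω n) (hμ : 0 < μ)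
    (hsum : ∑ n, ω n = 1)
    (u : (Fin N → ℝ) → Fin N → ℝ)
    (hu : ∀ a n, u a n = Real.rpow (a n) (β n) * (μ - ∑ m, τ m * a m))
    (aNE aPB : Fin N → ℝ)
    (hNE : ∀ n, aNE n = β n * μ / (τ n * (1 + ∑ m, β m)))
    (hPB : ∀ n, aPB n = ω n * β n * μ / (τ n * (1 + ∑ m, ω m * β m))) :
    (1 + ∑ n, ω n * β n) *
        Real.log ((1 + ∑ n, ω n * β n) ^ 2 /
          ((1 + ∑ n, ω n ^ 2 * β n) * (1 + ∑ n, β n)))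
      < ∑ n, ω n * Real.log (u aNE n / u aPB n) := by
  have : Nontrivial (Fin N) := Fin.nontrivial_iff_two_le.2 hN
  have hB : 0 < 1 + ∑ n, β n := one_add_sum_pos fun n => (hβ n).le
  have hS : 0 < 1 + ∑ n, ω n * β n :=
    one_add_sum_pos fun n => (mul_pos (hω n) (hβ n)).le
  have hT : 0 < 1 + ∑ n, ω n ^ 2 * β n :=
    one_add_sum_pos fun n => by have := hω n; have := hβ n; positivity
  have hjensen := sum_mul_log_lt_of_exists_ne_one (fun n => ω n * β n) ω
    (fun n => mul_pos (hω n) (hβ n)) hω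
    ⟨⟨0, by omega⟩, (lt_one_of_sum_eq_one_s5 hω hsum _).ne⟩
  rw [sum_congr rfl fun n _ => show ω n * β n * ω n = ω n ^ 2 * β n by ring] at hjensen
  have hsplit : ∑ n, ω n * Real.log (u aNE n / u aPB n) =
      (1 + ∑ n, ω n * β n) * (Real.log (1 + ∑ n, ω n * β n) - Real.log (1 + ∑ n, β n)) -
        ∑ n, ω n * β n * Real.log (ω n) := by
    simp only [log_utility_ratio hβ hτ hω hμ u hu aNE aPB hNE hPB, mul_add, mul_sub,
      sum_add_distrib, sum_sub_distrib, ← sum_mul, ← mul_assoc, hsum]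
    ring
  rw [hsplit, Real.log_div (by positivity) (mul_pos hT hB).ne', Real.log_mul hT.ne' hB.ne',
    Real.log_pow]
  push_cast
  linear_combination hjensen
end

section
/- In the Type II game, every point a* ∈ ℝ_{>0}^N with Σ_m τ_m a_m* < μ is a conjectural equilibrium: setting λ_n* = β_n(μ − Σ_m τ_m a_m*)/a_n*, reference points s̄_n = μ − Σ_m τ_m a_m* and ā_n = a_n*, the belief s̃_n(a_n) = s̄_n − λ_n*(a_n − ā_n) satisfies s̃_n(a_n*) = s_n(a*) and a_n* maximizes a_n ↦ a_n^{β_n}·s̃_n(a_n). -/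
/-- Weighted AM-GM with weights `b/(1+b)` and `1/(1+b)` applied to `t` and `1 + b - b t`,
whose weighted mean is `1`. -/
lemma rpow_mul_one_add_sub_mul_le_one {b t : ℝ} (hb : 0 < b) (ht : 0 < t)
    (hu : 0 ≤ 1 + b - b * t) : t ^ b * (1 + b - b * t) ≤ 1 := by
  have h1b : 0 < 1 + b := by linarith
  have hgm := Real.geom_mean_le_arith_mean2_weighted (w₁ := b / (1 + b)) (w₂ := 1 / (1 + b))
    (by positivity) (by positivity) ht.le hu (by field_simp; ring)
  have hmean : b / (1 + b) * t + 1 / (1 + b) * (1 + b - b * t) = 1 := by field_simp; ring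
  rw [hmean] at hgm
  calc t ^ b * (1 + b - b * t)
      = (t ^ (b / (1 + b)) * (1 + b - b * t) ^ (1 / (1 + b))) ^ (1 + b) := by
        rw [Real.mul_rpow (by positivity) (by positivity), ← Real.rpow_mul ht.le,
          ← Real.rpow_mul hu, div_mul_cancel₀ _ h1b.ne', div_mul_cancel₀ _ h1b.ne',
          Real.rpow_one]
    _ ≤ 1 := Real.rpow_le_one (by positivity) hgm h1b.le

lemma isMaxOn_rpow_mul_sub_mul_sub {β lam : ℝ} (hβ : 0 < β) (hlam : 0 < lam) (s a : ℝ) :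
    IsMaxOn (fun y => y ^ β * (s - lam * (y - a)))
      {y : ℝ | 0 < y ∧ 0 < s - lam * (y - a)} (β * (s + lam * a) / (lam * (1 + β))) := by
  set K := s + lam * a
  set y₀ := β * K / (lam * (1 + β))
  rintro y ⟨hy, hy_pos⟩
  have hK : 0 < K := by nlinarith
  have hy₀ : 0 < y₀ := by positivity
  set t := y / y₀
  have ht : 0 < t := div_pos hy hy₀
  have hlin : ∀ r, s - lam * (r * y₀ - a) = (1 + β - β * r) * (K / (1 + β)) := by
    intro r; simp only [y₀, K]; field_simp; ring
  have hyt : y = t * y₀ := by simp only [t]; field_simp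
  have hu : 0 < 1 + β - β * t := by
    rw [hyt, hlin] at hy_pos
    exact pos_of_mul_pos_left hy_pos (by positivity)
  show y ^ β * (s - lam * (y - a)) ≤ y₀ ^ β * (s - lam * (y₀ - a))
  calc y ^ β * (s - lam * (y - a))
      = (t ^ β * (1 + β - β * t)) * (y₀ ^ β * (K / (1 + β))) := by
        rw [hyt, hlin, Real.mul_rpow ht.le hy₀.le]; ring
    _ ≤ y₀ ^ β * (K / (1 + β)) :=
        mul_le_of_le_one_left (by positivity) (rpow_mul_one_add_sub_mul_le_one hβ ht hu.le)
    _ = y₀ ^ β * (s - lam * (y₀ - a)) := by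
        rw [← one_mul y₀, hlin, one_mul]; ring

theorem typeII_all_points_CE_general (N : ℕ)
    (β τ : Fin N → ℝ) (μ : ℝ)
    (hβ : ∀ n, 0 < β n)
    (a : Fin N → ℝ) (ha : ∀ n, 0 < a n) (hfeas : ∑ m, τ m * a m < μ)
    (lam : Fin N → ℝ)
    (hlam : ∀ n, lam n = β n * (μ - ∑ m, τ m * a m) / a n)
    (stilde : Fin N → ℝ → ℝ)
    (hs : ∀ n y, stilde n y = (μ - ∑ m, τ m * a m) - lam n * (y - a n)) :
    ∀ n, stilde n (a n) = μ - ∑ m, τ m * a m ∧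
      IsMaxOn (fun y => Real.rpow y (β n) * stilde n y)
        {y : ℝ | 0 < y ∧ 0 < stilde n y} (a n) := by
  intro n
  set s := μ - ∑ m, τ m * a m
  have hs_pos : 0 < s := sub_pos.mpr hfeas
  refine ⟨by rw [hs, sub_self, mul_zero, sub_zero], ?_⟩
  have hlam_pos : 0 < lam n := by rw [hlam]; exact div_pos (mul_pos (hβ n) hs_pos) (ha n)
  have hmax := isMaxOn_rpow_mul_sub_mul_sub (hβ n) hlam_pos s (a n)
  have hpeak : β n * (s + lam n * a n) / (lam n * (1 + β n)) = a n := by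
    have : 1 + β n ≠ 0 := by linarith [hβ n]
    rw [hlam]
    field_simp [(ha n).ne', (hβ n).ne', hs_pos.ne']
  rw [hpeak] at hmax
  simp only [hs]
  exact hmax

/-- In Type II games, every positive feasible point is a conjectural
equilibrium with the linear beliefs given by `λ_n* = β_n s_n(a*)/a_n*` and reference
points `(s_n(a*), a_n*)`. -/
theorem typeII_all_points_CE (N : ℕ) (hN : 1 ≤ N)
    (β τ : Fin N → ℝ) (μ : ℝ)
    (hβ : ∀ n, 0 < β n) (hτ : ∀ n, 0 < τ n) (hμ : 0 < μ)
    (a : Fin N → ℝ) (ha : ∀ n, 0 < a n) (hfeas : ∑ m, τ m * a m < μ)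
    (lam : Fin N → ℝ)
    (hlam : ∀ n, lam n = β n * (μ - ∑ m, τ m * a m) / a n)
    (stilde : Fin N → ℝ → ℝ)
    (hs : ∀ n y, stilde n y = (μ - ∑ m, τ m * a m) - lam n * (y - a n)) :
    ∀ n, stilde n (a n) = μ - ∑ m, τ m * a m ∧
      IsMaxOn (fun y => Real.rpow y (β n) * stilde n y)
        {y : ℝ | 0 < y ∧ 0 < stilde n y} (a n) :=
  typeII_all_points_CE_general N β τ μ hβ a ha hfeas lam hlam stilde hs
end

section
/- The eigenvalues of the N×N matrix J^{BR} with entries J_{nn} = β_n(λ_n − τ_n)/(λ_n(1+β_n)) and J_{ik} = −β_i τ_k/(λ_i(1+β_i)) for i ≠ k are exactly the roots of the equation [Σ_{n=1}^N τ_n/(λ_n(1 − ((1+β_n)/β_n)ξ)) − 1]·Π_{n=1}^N (ξ − β_n/(1+β_n)) = 0; i.e., the characteristic polynomial det(ξI − J^{BR}) equals this expression. -/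
open Finset Matrix

/-! Writing `u n = β n / (lam n * (1 + β n))`, the matrix `J^{BR}` is `diag (β / (1 + β)) - u τᵀ`,
so `ξ • 1 - J^{BR}` is the invertible diagonal matrix `diag (ξ - β / (1 + β))` plus a rank-one
matrix. The matrix determinant lemma turns its determinant into
`∏ n, (ξ - β n / (1 + β n)) * (1 + ∑ n, τ n * u n / (ξ - β n / (1 + β n)))`, and the sum here is
exactly minus the sum in the secular equation. -/

theorem Matrix.det_diagonal_add_vecMulVec {m K : Type*} [Fintype m] [DecidableEq m] [Field K]
    {d : m → K} (hd : ∀ i, d i ≠ 0) (u v : m → K) :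
    (diagonal d + vecMulVec u v).det = (∏ i, d i) * (1 + v ⬝ᵥ fun i => u i / d i) := by
  have hfactor :
      diagonal d + vecMulVec u v = diagonal d * (1 + vecMulVec (fun i => u i / d i) v) := by
    rw [Matrix.mul_add, Matrix.mul_one]
    congr 1
    ext i j
    rw [diagonal_mul, vecMulVec_apply, vecMulVec_apply, ← mul_assoc, mul_div_cancel₀ _ (hd i)]
  rw [hfactor, det_mul, det_diagonal, vecMulVec_eq Unit, det_one_add_replicateCol_mul_replicateRow]

theorem eq_diagonal_sub_vecMulVec_of_apply {N : ℕ} {β τ lam : Fin N → ℝ}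
    (hβ : ∀ n, 1 + β n ≠ 0) (hlam : ∀ n, lam n ≠ 0) {J : Matrix (Fin N) (Fin N) ℝ}
    (hJ : ∀ i k, J i k = if i = k then β i * (lam i - τ i) / (lam i * (1 + β i))
        else -(β i * τ k / (lam i * (1 + β i)))) :
    J = diagonal (fun n => β n / (1 + β n)) - vecMulVec (fun n => β n / (lam n * (1 + β n))) τ := by
  ext i k
  rw [hJ]
  by_cases h : i = k
  · subst h
    simp only [↓reduceIte, Matrix.sub_apply, diagonal_apply_eq, vecMulVec_apply]
    field_simp [hβ i, hlam i]
  · simp [h, vecMulVec_apply]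
    ring

theorem charpoly_JBR_general (N : ℕ)
    (β τ lam : Fin N → ℝ)
    (hβ : ∀ n, 0 < β n) (hlam : ∀ n, 0 < lam n)
    (J : Matrix (Fin N) (Fin N) ℝ)
    (hJ : ∀ i k, J i k = if i = k then β i * (lam i - τ i) / (lam i * (1 + β i))
        else -(β i * τ k / (lam i * (1 + β i)))) :
    ∀ ξ : ℝ, (∀ n, ξ ≠ β n / (1 + β n)) →
      (Matrix.det (ξ • (1 : Matrix (Fin N) (Fin N) ℝ) - J) = 0 ↔
        ((∑ n, τ n / (lam n * (1 - (1 + β n) / β n * ξ))) - 1)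
            * ∏ n, (ξ - β n / (1 + β n)) = 0) := by
  intro ξ hξ
  have hβ1 (n : Fin N) : 1 + β n ≠ 0 := by linarith [hβ n]
  set d : Fin N → ℝ := fun n => ξ - β n / (1 + β n)
  set u : Fin N → ℝ := fun n => β n / (lam n * (1 + β n))
  have hshift : ξ • (1 : Matrix (Fin N) (Fin N) ℝ) - J = diagonal d + vecMulVec u τ := by
    rw [eq_diagonal_sub_vecMulVec_of_apply hβ1 (fun n => (hlam n).ne') hJ, smul_one_eq_diagonal,
      ← sub_add, diagonal_sub]
  have hsum : ∑ n, τ n / (lam n * (1 - (1 + β n) / β n * ξ)) = -(τ ⬝ᵥ fun n => u n / d n) := by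
    rw [dotProduct, ← sum_neg_distrib]
    refine sum_congr rfl fun n _ => ?_
    have hpole : 1 - (1 + β n) / β n * ξ = -((1 + β n) / β n) * d n := by
      simp only [d]
      field_simp [(hβ n).ne', hβ1 n]
      ring
    rw [hpole]
    simp only [u]
    field_simp
  rw [hshift, det_diagonal_add_vecMulVec (fun n => sub_ne_zero.mpr (hξ n)), hsum]
  constructor <;> intro h <;> linear_combination -h

/-- The eigenvalues of the best-response Jacobian `J^{BR}` are exactly the
roots of `[Σ_n τ_n/(λ_n(1 − ((1+β_n)/β_n)ξ)) − 1]·Π_n (ξ − β_n/(1+β_n)) = 0`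
(away from the poles of the sum). -/
theorem charpoly_JBR (N : ℕ) (hN : 1 ≤ N)
    (β τ lam : Fin N → ℝ)
    (hβ : ∀ n, 0 < β n) (hτ : ∀ n, 0 < τ n) (hlam : ∀ n, 0 < lam n)
    (J : Matrix (Fin N) (Fin N) ℝ)
    (hJ : ∀ i k, J i k = if i = k then β i * (lam i - τ i) / (lam i * (1 + β i))
        else -(β i * τ k / (lam i * (1 + β i)))) :
    ∀ ξ : ℝ, (∀ n, ξ ≠ β n / (1 + β n)) →
      (Matrix.det (ξ • (1 : Matrix (Fin N) (Fin N) ℝ) - J) = 0 ↔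
        ((∑ n, τ n / (lam n * (1 - (1 + β n) / β n * ξ))) - 1)
            * ∏ n, (ξ - β n / (1 + β n)) = 0) :=
  charpoly_JBR_general N β τ lam hβ hlam J hJ
end

section
/- All eigenvalues of the matrix J^{BR} are real and strictly less than 1. -/
/-!
Write `J^{BR} = diag d - u τᵀ` with `d i = β i / (1 + β i) ∈ (0, 1)` and `u, τ > 0`. For an
eigenvector `x` one has `(ξ - d i) x i = -u i (τ ⬝ᵥ x)`, so either `τ ⬝ᵥ x = 0` and `ξ` is some
`d i`, or `ξ` solves the secular equation `∑ τ i u i / (ξ - d i) = -1`. With positive weights the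
imaginary part of the left side is `-Im ξ` times a positive number, so `ξ` is real; and a real
root lies below some `d i`, since otherwise every term of the sum is nonnegative.
-/

open Finset Matrix

variable {ι : Type*} [Fintype ι]

theorem Matrix.eigenvalue_mem_range_or_secular_eq [DecidableEq ι] {K : Type*} [Field K]
    {d u τ x : ι → K} {ξ : K} (hx : x ≠ 0) (h : (diagonal d - vecMulVec u τ) *ᵥ x = ξ • x) :
    ξ ∈ Set.range d ∨ ∑ i, τ i * u i / (ξ - d i) = -1 := by
  have hrow (i : ι) : (ξ - d i) * x i = -(u i * (τ ⬝ᵥ x)) := by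
    have := congrFun h i
    simp only [sub_mulVec, mulVec_diagonal, vecMulVec_mulVec, Pi.sub_apply, Pi.smul_apply,
      op_smul_eq_mul, smul_eq_mul] at this
    linear_combination -this
  by_cases hξ : ξ ∈ Set.range d
  · exact .inl hξ
  right
  have hne (i : ι) : ξ - d i ≠ 0 := sub_ne_zero.mpr fun h ↦ hξ ⟨i, h.symm⟩
  have hs : τ ⬝ᵥ x ≠ 0 := by
    intro hs
    refine hx (funext fun i ↦ ?_)
    simpa [hs, hne i] using hrow i
  have hxi (i : ι) : x i = -(u i * (τ ⬝ᵥ x)) / (ξ - d i) := by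
    rw [eq_div_iff (hne i), mul_comm, hrow]
  have hs_eq : τ ⬝ᵥ x = -(τ ⬝ᵥ x) * ∑ i, τ i * u i / (ξ - d i) := by
    conv_lhs => rw [dotProduct, Finset.sum_congr rfl fun i _ ↦ congrArg (τ i * ·) (hxi i)]
    rw [Finset.mul_sum]
    refine Finset.sum_congr rfl fun i _ ↦ ?_
    ring
  exact mul_left_cancel₀ hs (by linear_combination hs_eq)

theorem Complex.im_sum_ofReal_div_sub (w d : ι → ℝ) (ξ : ℂ) :
    (∑ i, (w i : ℂ) / (ξ - d i)).im = -ξ.im * ∑ i, w i / normSq (ξ - d i) := by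
  simp only [im_sum, div_im, ofReal_im, sub_im, ofReal_re, zero_mul, zero_div, zero_sub,
    Finset.mul_sum]
  refine Finset.sum_congr rfl fun i _ ↦ ?_
  ring

theorem Complex.im_eq_zero_of_sum_ofReal_div_sub_eq_neg_one {w d : ι → ℝ} (hw : ∀ i, 0 < w i)
    {ξ : ℂ} (h : ∑ i, (w i : ℂ) / (ξ - d i) = -1) : ξ.im = 0 := by
  obtain ⟨i₀, -, -⟩ := Finset.exists_ne_zero_of_sum_ne_zero (h ▸ neg_ne_zero.mpr one_ne_zero)
  by_contra him
  have hne (i : ι) : ξ - d i ≠ 0 := fun h ↦ him (by simpa using congrArg im h)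
  have hpos : 0 < ∑ i, w i / normSq (ξ - d i) :=
    Finset.sum_pos (fun i _ ↦ div_pos (hw i) (normSq_pos.mpr (hne i))) ⟨i₀, mem_univ _⟩
  have := im_sum_ofReal_div_sub w d ξ
  rw [h] at this
  simp only [neg_im, one_im, neg_zero, neg_mul, zero_eq_neg, mul_eq_zero] at this
  exact this.elim him hpos.ne'

theorem exists_lt_of_sum_div_sub_eq_neg_one {w d : ι → ℝ} (hw : ∀ i, 0 ≤ w i) {t : ℝ}
    (h : ∑ i, w i / (t - d i) = -1) : ∃ i, t < d i := by
  by_contra! hle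
  have : 0 ≤ ∑ i, w i / (t - d i) :=
    Finset.sum_nonneg fun i _ ↦ div_nonneg (hw i) (sub_nonneg.mpr (hle i))
  linarith

theorem Matrix.im_eq_zero_and_exists_re_le_of_mem_spectrum_diagonal_sub_vecMulVec
    [DecidableEq ι] {d u τ : ι → ℝ} (hw : ∀ i, 0 < τ i * u i) {ξ : ℂ}
    (hξ : ξ ∈ spectrum ℂ ((diagonal d - vecMulVec u τ).map (algebraMap ℝ ℂ))) :
    ξ.im = 0 ∧ ∃ i, ξ.re ≤ d i := by
  rw [← spectrum_toLin', ← Module.End.hasEigenvalue_iff_mem_spectrum] at hξ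
  obtain ⟨x, hx⟩ := hξ.exists_hasEigenvector
  have hmap : (diagonal d - vecMulVec u τ).map (algebraMap ℝ ℂ) =
      diagonal (fun i ↦ (d i : ℂ)) - vecMulVec (fun i ↦ (u i : ℂ)) (fun i ↦ (τ i : ℂ)) := by
    ext i j
    by_cases hij : i = j <;> simp [vecMulVec_apply, hij]
  have hAx := hx.apply_eq_smul
  rw [toLin'_apply, hmap] at hAx
  rcases eigenvalue_mem_range_or_secular_eq hx.2 hAx with ⟨i, rfl⟩ | hsec
  · exact ⟨Complex.ofReal_im _, i, (Complex.ofReal_re _).le⟩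
  · have hsec' : ∑ i, ((τ i * u i : ℝ) : ℂ) / (ξ - d i) = -1 := by exact_mod_cast hsec
    have him := Complex.im_eq_zero_of_sum_ofReal_div_sub_eq_neg_one hw hsec'
    have hreal : ∑ i, τ i * u i / (ξ.re - d i) = -1 := by
      rw [← Complex.re_add_im ξ, him, Complex.ofReal_zero, zero_mul, add_zero] at hsec'
      exact_mod_cast hsec'
    obtain ⟨i, hi⟩ := exists_lt_of_sum_div_sub_eq_neg_one (fun i ↦ (hw i).le) hreal
    exact ⟨him, i, hi.le⟩

theorem JBR_eigenvalues_real_lt_one_general (N : ℕ)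
    (β τ lam : Fin N → ℝ)
    (hβ : ∀ n, 0 < β n) (hτ : ∀ n, 0 < τ n) (hlam : ∀ n, 0 < lam n)
    (J : Matrix (Fin N) (Fin N) ℝ)
    (hJ : ∀ i k, J i k = if i = k then β i * (lam i - τ i) / (lam i * (1 + β i))
        else -(β i * τ k / (lam i * (1 + β i)))) :
    ∀ ξ : ℂ, ξ ∈ spectrum ℂ (J.map (algebraMap ℝ ℂ)) → ξ.im = 0 ∧ ξ.re < 1 := by
  intro ξ hξ
  set d : Fin N → ℝ := fun i ↦ β i / (1 + β i)
  set u : Fin N → ℝ := fun i ↦ β i / (lam i * (1 + β i))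
  have hJ_eq : J = diagonal d - vecMulVec u τ := by
    ext i k
    have hlam_ne := (hlam i).ne'
    have hβ_ne : 1 + β i ≠ 0 := by linarith [hβ i]
    by_cases hik : i = k
    · subst hik
      simp only [hJ, if_true, Matrix.sub_apply, diagonal_apply_eq, vecMulVec_apply, d, u]
      field_simp
    · simp [hJ, hik, vecMulVec_apply, u, div_mul_eq_mul_div]
  have hw (i : Fin N) : 0 < τ i * u i :=
    mul_pos (hτ i) (div_pos (hβ i) (mul_pos (hlam i) (by linarith [hβ i])))
  obtain ⟨him, i, hi⟩ :=
    im_eq_zero_and_exists_re_le_of_mem_spectrum_diagonal_sub_vecMulVec hw (hJ_eq ▸ hξ)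
  have hd : d i < 1 := (div_lt_one (by linarith [hβ i])).mpr (by linarith)
  exact ⟨him, hi.trans_lt hd⟩

/-- All eigenvalues of `J^{BR}` are real and strictly less than 1. -/
theorem JBR_eigenvalues_real_lt_one (N : ℕ) (hN : 1 ≤ N)
    (β τ lam : Fin N → ℝ)
    (hβ : ∀ n, 0 < β n) (hτ : ∀ n, 0 < τ n) (hlam : ∀ n, 0 < lam n)
    (J : Matrix (Fin N) (Fin N) ℝ)
    (hJ : ∀ i k, J i k = if i = k then β i * (lam i - τ i) / (lam i * (1 + β i))
        else -(β i * τ k / (lam i * (1 + β i)))) :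
    ∀ ξ : ℂ, ξ ∈ spectrum ℂ (J.map (algebraMap ℝ ℂ)) → ξ.im = 0 ∧ ξ.re < 1 :=
  JBR_eigenvalues_real_lt_one_general N β τ lam hβ hτ hlam J hJ
end

section
/- If q(ξ) = Σ_{n=1}^N τ_n/(λ_n(1 − ((1+β_n)/β_n)ξ)) with all β_n, τ_n, λ_n > 0 and distinct values β_1 < β_2 < … < β_N, then q is continuous and strictly increasing on (−∞, β_1/(1+β_1)), and every root of q(ξ) = 1 in this interval exceeds −1 if and only if q(−1) < 1, i.e., Σ_n τ_n β_n/(λ_n(1+2β_n)) < 1. -/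
open Finset

/-- With distinct `β_1 < … < β_N`, the function
`q(ξ) = Σ_n τ_n/(λ_n(1 − ((1+β_n)/β_n)ξ))` is continuous and strictly increasing on
`(−∞, β_1/(1+β_1))`, and every root of `q(ξ) = 1` in this interval exceeds −1 iff
`q(−1) = Σ_n τ_n β_n/(λ_n(1+2β_n)) < 1`. -/
theorem q_monotone_root_condition (N : ℕ) (hN : 0 < N)
    (β τ lam : Fin N → ℝ)
    (hβ : ∀ n, 0 < β n) (hτ : ∀ n, 0 < τ n) (hlam : ∀ n, 0 < lam n)
    (hmono : StrictMono β)
    (q : ℝ → ℝ)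
    (hq : ∀ ξ, q ξ = ∑ n, τ n / (lam n * (1 - (1 + β n) / β n * ξ))) :
    ContinuousOn q (Set.Iio (β ⟨0, hN⟩ / (1 + β ⟨0, hN⟩))) ∧
    StrictMonoOn q (Set.Iio (β ⟨0, hN⟩ / (1 + β ⟨0, hN⟩))) ∧
    ((∀ ξ ∈ Set.Iio (β ⟨0, hN⟩ / (1 + β ⟨0, hN⟩)), q ξ = 1 → -1 < ξ)
      ↔ ∑ n, τ n * β n / (lam n * (1 + 2 * β n)) < 1) := by
  have hne : Nonempty (Fin N) := ⟨⟨0, hN⟩⟩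
  set b0 := β ⟨0, hN⟩ with hb0
  set ξ0 := b0 / (1 + b0) with hξ0
  have hb0pos : 0 < b0 := hβ _
  have hξ0pos : 0 < ξ0 := div_pos hb0pos (by linarith)
  have hneg : (-1 : ℝ) < ξ0 := by linarith
  -- denominators are positive on Iio ξ0
  have hden : ∀ n : Fin N, ∀ ξ ∈ Set.Iio ξ0, 0 < 1 - (1 + β n) / β n * ξ := by
    intro n ξ hξ
    have hbn := hβ n
    have hble : b0 ≤ β n := hmono.monotone (by simp [Fin.le_def])
    have hfrac : ξ0 ≤ β n / (1 + β n) := by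
      rw [hξ0, div_le_div_iff₀ (by linarith) (by linarith)]
      nlinarith
    have hlt : ξ < β n / (1 + β n) := lt_of_lt_of_le hξ hfrac
    have h2 : ξ * (1 + β n) < β n := (lt_div_iff₀ (by linarith)).mp hlt
    have h3 : (1 + β n) / β n * ξ < 1 := by
      rw [div_mul_eq_mul_div, div_lt_one hbn]
      nlinarith
    linarith
  have hqf : q = fun ξ => ∑ n, τ n / (lam n * (1 - (1 + β n) / β n * ξ)) := funext hq
  -- continuity
  have hcont : ContinuousOn q (Set.Iio ξ0) := by
    rw [hqf]
    apply continuousOn_finset_sum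
    intro n _
    apply ContinuousOn.div continuousOn_const
    · fun_prop
    · intro ξ hξ
      exact (mul_pos (hlam n) (hden n ξ hξ)).ne'
  -- strict monotonicity
  have hmonoq : StrictMonoOn q (Set.Iio ξ0) := by
    intro x hx y hy hxy
    rw [hq, hq]
    apply Finset.sum_lt_sum_of_nonempty Finset.univ_nonempty
    intro n _
    have hdx := hden n x hx
    have hdy := hden n y hy
    have hc : 0 < (1 + β n) / β n := div_pos (by linarith [hβ n]) (hβ n)
    have hmul : (1 + β n) / β n * x < (1 + β n) / β n * y :=
      mul_lt_mul_of_pos_left hxy hc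
    exact div_lt_div_of_pos_left (hτ n) (mul_pos (hlam n) hdy)
      (by nlinarith [hlam n])
  -- value at -1
  have hq1 : q (-1) = ∑ n, τ n * β n / (lam n * (1 + 2 * β n)) := by
    rw [hq]
    apply Finset.sum_congr rfl
    intro n _
    have hb := hβ n
    have hl := hlam n
    have h1 : β n ≠ 0 := hb.ne'
    have h2 : lam n ≠ 0 := hl.ne'
    have h3 : (1 + 2 * β n) ≠ 0 := by positivity
    have hdpos : 0 < 1 - (1 + β n) / β n * (-1) := by
      have : 0 < (1 + β n) / β n := div_pos (by linarith) hb
      linarith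
    rw [div_eq_div_iff (mul_pos hl hdpos).ne' (mul_pos hl (by positivity)).ne']
    field_simp
    ring
  refine ⟨hcont, hmonoq, ?_, ?_⟩
  · -- forward direction
    intro hall
    by_contra hge
    push_neg at hge
    rw [← hq1] at hge
    set S := ∑ n, τ n / (lam n * ((1 + β n) / β n)) with hS
    have hSpos : 0 ≤ S := Finset.sum_nonneg fun n _ => by
      have hc : 0 < (1 + β n) / β n := div_pos (by linarith [hβ n]) (hβ n)
      exact div_nonneg (hτ n).le (mul_nonneg (hlam n).le hc.le)
    set K := S + 1 with hK
    have hK1 : (1 : ℝ) ≤ K := by linarith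
    have hqK : q (-K) < 1 := by
      rw [hq]
      have hterm : ∀ n ∈ (univ : Finset (Fin N)),
          τ n / (lam n * (1 - (1 + β n) / β n * (-K)))
            ≤ (τ n / (lam n * ((1 + β n) / β n))) / K := by
        intro n _
        have hb := hβ n
        have hl := hlam n
        have hc : 0 < (1 + β n) / β n := div_pos (by linarith) hb
        rw [div_div]
        apply div_le_div_of_nonneg_left (hτ n).le
        · positivity
        · nlinarith
      calc ∑ n, τ n / (lam n * (1 - (1 + β n) / β n * (-K)))
          ≤ ∑ n, (τ n / (lam n * ((1 + β n) / β n))) / K := Finset.sum_le_sum hterm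
        _ = S / K := by rw [← Finset.sum_div]
        _ < 1 := by rw [div_lt_one (by linarith)]; linarith
    have hIcc : Set.Icc (-K) (-1 : ℝ) ⊆ Set.Iio ξ0 := fun x hx =>
      lt_of_le_of_lt hx.2 hneg
    have hcont' : ContinuousOn q (Set.Icc (-K) (-1)) := hcont.mono hIcc
    have h1mem : (1 : ℝ) ∈ Set.Icc (q (-K)) (q (-1)) := ⟨hqK.le, hge⟩
    obtain ⟨ξ, hξmem, hξeq⟩ :=
      intermediate_value_Icc (by linarith : (-K : ℝ) ≤ -1) hcont' h1mem
    have := hall ξ (hIcc hξmem) hξeq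
    linarith [hξmem.2]
  · -- backward direction
    intro hlt ξ hξ hroot
    by_contra hle
    push_neg at hle
    have hmem1 : (-1 : ℝ) ∈ Set.Iio ξ0 := hneg
    have hmono1 : q ξ ≤ q (-1) := hmonoq.monotoneOn hξ hmem1 hle
    rw [hroot, hq1] at hmono1
    linarith
end

section
/- The fixed point of the best-response map B_n(a) = β_n(μ − Σ_{m≠n} τ_m a_m)/(λ_n(1+β_n)) + β_n(λ_n − τ_n)a_n/(λ_n(1+β_n)) is unique and given by a_n^{CE} = β_n μ / (λ_n(1 + Σ_{m=1}^N τ_m β_m/λ_m)) for all n; equivalently, a^{CE} solves (λ_n + β_n τ_n)a_n + β_n Σ_{m≠n} τ_m a_m = β_n μ for all n. -/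
/-!
Substituting `a_n = B_n(a)` and clearing the denominator `λ_n (1 + β_n)` turns the fixed-point
equation into the linear system `λ_n a_n + β_n S = β_n μ` with `S = Σ_m τ_m a_m`: a diagonal
matrix plus a rank-one term. Any solution is therefore `a_n = β_n (μ - S) / λ_n`, and feeding this
back into `S` gives the scalar equation `S = (μ - S) C` with `C = Σ_m τ_m β_m / λ_m ≥ 0`, whose
unique solution is `μ - S = μ / (1 + C)` (the Sherman–Morrison formula in this special case).
-/

open Finset

section RankOneSystem

variable {ι : Type*} [Fintype ι] (d b c : ι → ℝ) (μ : ℝ)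

theorem sum_mul_eq_mul_sum_of_eq_mul_div {x : ι → ℝ} {t : ℝ} (hx : ∀ n, x n = b n * t / d n) :
    ∑ m, c m * x m = t * ∑ m, c m * b m / d m := by
  rw [mul_sum]
  exact sum_congr rfl fun m _ => by rw [hx m]; ring

theorem diag_add_rankOne_system_iff (hd : ∀ n, d n ≠ 0) (hC : 1 + ∑ m, c m * b m / d m ≠ 0)
    (x : ι → ℝ) :
    (∀ n, d n * x n + b n * ∑ m, c m * x m = b n * μ)
      ↔ ∀ n, x n = b n * μ / (d n * (1 + ∑ m, c m * b m / d m)) := by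
  set C := ∑ m, c m * b m / d m
  have hsol : ∀ n, x n = b n * μ / (d n * (1 + C)) ↔ x n = b n * (μ / (1 + C)) / d n := by
    intro n
    rw [mul_div_assoc', div_div, mul_comm (1 + C)]
  simp_rw [hsol]
  constructor
  · intro hsys
    set S := ∑ m, c m * x m
    have hx : ∀ n, x n = b n * (μ - S) / d n := fun n => by
      rw [eq_div_iff (hd n)]
      linarith [hsys n]
    have hS : S = (μ - S) * C := sum_mul_eq_mul_sum_of_eq_mul_div d b c hx
    have hμS : μ - S = μ / (1 + C) := by
      rw [eq_div_iff hC]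
      linarith
    simpa only [hμS] using hx
  · intro hx n
    rw [sum_mul_eq_mul_sum_of_eq_mul_div d b c hx, hx n]
    field_simp [hd n]
    ring

end RankOneSystem

theorem bestResponse_eq_iff {ι : Type*} [Fintype ι] [DecidableEq ι] (β τ lam a : ι → ℝ) (μ : ℝ)
    (n : ι) (hlam : lam n ≠ 0) (hβ : 1 + β n ≠ 0) :
    a n = β n * (μ - ∑ m ∈ univ.erase n, τ m * a m) / (lam n * (1 + β n))
        + β n * (lam n - τ n) * a n / (lam n * (1 + β n))
      ↔ lam n * a n + β n * ∑ m, τ m * a m = β n * μ := by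
  rw [sum_erase_eq_sub (mem_univ n), ← add_div, eq_div_iff (mul_ne_zero hlam hβ)]
  constructor <;> intro h <;> linarith

theorem best_response_fixed_point_general (N : ℕ)
    (β τ lam : Fin N → ℝ) (μ : ℝ)
    (hβ : ∀ n, 0 < β n) (hτ : ∀ n, 0 < τ n) (hlam : ∀ n, 0 < lam n)
    (B : (Fin N → ℝ) → Fin N → ℝ)
    (hB : ∀ a n, B a n
        = β n * (μ - ∑ m ∈ univ.erase n, τ m * a m) / (lam n * (1 + β n))
          + β n * (lam n - τ n) * a n / (lam n * (1 + β n)))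
    (a : Fin N → ℝ) :
    (∀ n, a n = B a n)
      ↔ (∀ n, a n = β n * μ / (lam n * (1 + ∑ m, τ m * β m / lam m))) := by
  have hC : 0 ≤ ∑ m, τ m * β m / lam m :=
    sum_nonneg fun m _ => div_nonneg (mul_pos (hτ m) (hβ m)).le (hlam m).le
  calc (∀ n, a n = B a n)
      ↔ ∀ n, lam n * a n + β n * ∑ m, τ m * a m = β n * μ := forall_congr' fun n => by
        rw [hB]
        exact bestResponse_eq_iff β τ lam a μ n (hlam n).ne' (by linarith [hβ n])
    _ ↔ _ := diag_add_rankOne_system_iff lam β τ μ (fun n => (hlam n).ne') (by linarith) a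

/-- The unique fixed point of the best-response map is
`a_n^{CE} = β_n μ / (λ_n (1 + Σ_m τ_m β_m / λ_m))`; equivalently, the fixed-point (linear)
system holds iff `a` equals this point. -/
theorem best_response_fixed_point (N : ℕ) (hN : 1 ≤ N)
    (β τ lam : Fin N → ℝ) (μ : ℝ)
    (hβ : ∀ n, 0 < β n) (hτ : ∀ n, 0 < τ n) (hlam : ∀ n, 0 < lam n) (hμ : 0 < μ)
    (B : (Fin N → ℝ) → Fin N → ℝ)
    (hB : ∀ a n, B a n
        = β n * (μ - ∑ m ∈ univ.erase n, τ m * a m) / (lam n * (1 + β n))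
          + β n * (lam n - τ n) * a n / (lam n * (1 + β n)))
    (a : Fin N → ℝ) :
    (∀ n, a n = B a n)
      ↔ (∀ n, a n = β n * μ / (lam n * (1 + ∑ m, τ m * β m / lam m))) :=
  best_response_fixed_point_general N β τ lam μ hβ hτ hlam B hB a
end

section
/- The conjectural equilibrium a^{CE} with parameters λ_n coincides with the proportional-fair point a^{PB} with weights ω_n (ω_n > 0, Σ ω_n = 1) if and only if λ_n = τ_n/ω_n for all n. Consequently, the CE is Pareto-optimal (for some weight vector) if and only if Σ_{n=1}^N τ_n/λ_n = 1. -/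
open Finset

/-- `a^{CE}(λ) = a^{PB}(ω)` iff `λ_n = τ_n/ω_n` for all `n`; consequently,
the CE is Pareto-optimal for some weight vector iff `Σ_n τ_n/λ_n = 1`. -/
theorem CE_pareto_iff (N : ℕ) (hN : 1 ≤ N)
    (β τ : Fin N → ℝ) (μ : ℝ)
    (hβ : ∀ n, 0 < β n) (hτ : ∀ n, 0 < τ n) (hμ : 0 < μ) :
    (∀ lam ω : Fin N → ℝ, (∀ n, 0 < lam n) → (∀ n, 0 < ω n) → ∑ n, ω n = 1 →
      ((∀ n, β n * μ / (lam n * (1 + ∑ m, τ m * β m / lam m))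
            = ω n * β n * μ / (τ n * (1 + ∑ m, ω m * β m)))
        ↔ ∀ n, lam n = τ n / ω n)) ∧
    (∀ lam : Fin N → ℝ, (∀ n, 0 < lam n) →
      ((∃ ω : Fin N → ℝ, (∀ n, 0 < ω n) ∧ ∑ n, ω n = 1 ∧
          ∀ n, β n * μ / (lam n * (1 + ∑ m, τ m * β m / lam m))
            = ω n * β n * μ / (τ n * (1 + ∑ m, ω m * β m)))
        ↔ ∑ n, τ n / lam n = 1)) := by
  have key : ∀ lam ω : Fin N → ℝ, (∀ n, 0 < lam n) → (∀ n, 0 < ω n) → ∑ n, ω n = 1 →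
      ((∀ n, β n * μ / (lam n * (1 + ∑ m, τ m * β m / lam m))
            = ω n * β n * μ / (τ n * (1 + ∑ m, ω m * β m)))
        ↔ ∀ n, lam n = τ n / ω n) := by
    intro lam ω hlam hω hsum
    have hQ : (0:ℝ) ≤ ∑ m, τ m * β m / lam m :=
      Finset.sum_nonneg fun m _ =>
        (div_pos (mul_pos (hτ m) (hβ m)) (hlam m)).le
    have hR : (0:ℝ) ≤ ∑ m, ω m * β m :=
      Finset.sum_nonneg fun m _ => (mul_pos (hω m) (hβ m)).le
    have hSpos : (0:ℝ) < 1 + ∑ m, τ m * β m / lam m := by linarith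
    have hTpos : (0:ℝ) < 1 + ∑ m, ω m * β m := by linarith
    set S := 1 + ∑ m, τ m * β m / lam m with hSdef
    set T := 1 + ∑ m, ω m * β m with hTdef
    have hSne : S ≠ 0 := hSpos.ne'
    have hTne : T ≠ 0 := hTpos.ne'
    constructor
    · intro h
      have hcross : ∀ n, τ n * T = ω n * lam n * S := by
        intro n
        have hn := h n
        have hl : lam n ≠ 0 := (hlam n).ne'
        have ht : τ n ≠ 0 := (hτ n).ne'
        have hb : β n ≠ 0 := (hβ n).ne'
        have hm : μ ≠ 0 := hμ.ne'
        field_simp at hn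
        have hbm : (0:ℝ) < β n * μ := mul_pos (hβ n) hμ
        nlinarith [hn, hbm]
      have hST : S = T := by
        have hsum2 : ∑ m, τ m * β m / lam m = (S / T) * ∑ m, ω m * β m := by
          rw [Finset.mul_sum]
          refine Finset.sum_congr rfl fun m _ => ?_
          have hc := hcross m
          have hl : lam m ≠ 0 := (hlam m).ne'
          field_simp
          linear_combination β m * hc
        have e1 : S - 1 = (S / T) * (T - 1) := by
          have h1 : ∑ m, ω m * β m = T - 1 := by rw [hTdef]; ring
          have h2 : ∑ m, τ m * β m / lam m = S - 1 := by rw [hSdef]; ring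
          rw [h1, h2] at hsum2
          exact hsum2
        rw [div_mul_eq_mul_div, eq_div_iff hTne] at e1
        nlinarith [e1]
      intro n
      have hc := hcross n
      rw [hST] at hc
      have h2 : τ n = ω n * lam n := mul_right_cancel₀ hTne (by linarith)
      rw [h2, mul_comm, mul_div_assoc, div_self (hω n).ne', mul_one]
    · intro h n
      have hST : S = T := by
        rw [hSdef, hTdef]
        congr 1
        refine Finset.sum_congr rfl fun m _ => ?_
        rw [h m]
        have ht : τ m ≠ 0 := (hτ m).ne'
        field_simp
      rw [h n, hST]
      rw [div_mul_eq_mul_div, div_div_eq_mul_div]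
      have ht : τ n ≠ 0 := (hτ n).ne'
      have hw : ω n ≠ 0 := (hω n).ne'
      field_simp
  refine ⟨key, ?_⟩
  intro lam hlam
  constructor
  · rintro ⟨ω, hω, hsum, h⟩
    have h2 := (key lam ω hlam hω hsum).mp h
    calc ∑ n, τ n / lam n = ∑ n, ω n := by
          refine Finset.sum_congr rfl fun n _ => ?_
          rw [h2 n, div_div_eq_mul_div, mul_comm, mul_div_assoc,
            div_self (hτ n).ne', mul_one]
      _ = 1 := hsum
  · intro hs
    refine ⟨fun n => τ n / lam n, fun n => div_pos (hτ n) (hlam n), hs, ?_⟩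
    refine (key lam _ hlam (fun n => div_pos (hτ n) (hlam n)) hs).mpr fun n => ?_
    rw [div_div_eq_mul_div, mul_comm, mul_div_assoc, div_self (hτ n).ne', mul_one]
end

section
/- For any λ ∈ ℝ_{>0}^N and weights ω_n > 0 with Σ ω_n = 1, the weighted log-utility gap between the conjectural equilibrium and the proportional-fair point satisfies Σ_n ω_n log(u_n(a^{CE})/u_n(a^{PB})) ≤ 0, with equality if and only if ω_n = τ_n/λ_n for all n. -/
open Finset

lemma log_gap_nonneg' {t : ℝ} (ht : 0 < t) : 0 ≤ (t - 1) - Real.log t := by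
  linarith [Real.log_le_sub_one_of_pos ht]

lemma log_gap_eq_zero_iff' {t : ℝ} (ht : 0 < t) :
    (t - 1) - Real.log t = 0 ↔ t = 1 := by
  constructor
  · intro h
    by_contra hne
    have := Real.log_lt_sub_one_of_pos ht hne
    linarith
  · intro h; simp [h]

/-- The weighted log-utility gap between the conjectural equilibrium and
the proportional-fair point is ≤ 0, with equality iff `ω_n = τ_n/λ_n` for all `n`. -/
theorem CE_gap_nonpos (N : ℕ) (hN : 1 ≤ N)
    (β τ ω lam : Fin N → ℝ) (μ : ℝ)
    (hβ : ∀ n, 0 < β n) (hτ : ∀ n, 0 < τ n) (hω : ∀ n, 0 < ω n)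
    (hlam : ∀ n, 0 < lam n) (hμ : 0 < μ) (hsum : ∑ n, ω n = 1)
    (u : (Fin N → ℝ) → Fin N → ℝ)
    (hu : ∀ a n, u a n = Real.rpow (a n) (β n) * (μ - ∑ m, τ m * a m))
    (aCE aPB : Fin N → ℝ)
    (hCE : ∀ n, aCE n = β n * μ / (lam n * (1 + ∑ m, τ m * β m / lam m)))
    (hPB : ∀ n, aPB n = ω n * β n * μ / (τ n * (1 + ∑ m, ω m * β m))) :
    ∑ n, ω n * Real.log (u aCE n / u aPB n) ≤ 0 ∧
    (∑ n, ω n * Real.log (u aCE n / u aPB n) = 0 ↔ ∀ n, ω n = τ n / lam n) := by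
  obtain ⟨S, hSdef⟩ : ∃ S : ℝ, S = 1 + ∑ m, τ m * β m / lam m := ⟨_, rfl⟩
  obtain ⟨T, hTdef⟩ : ∃ T : ℝ, T = 1 + ∑ m, ω m * β m := ⟨_, rfl⟩
  simp only [← hSdef] at hCE
  simp only [← hTdef] at hPB
  have hSsum : 0 ≤ ∑ m, τ m * β m / lam m :=
    Finset.sum_nonneg fun m _ =>
      div_nonneg (mul_nonneg (hτ m).le (hβ m).le) (hlam m).le
  have hTsum : 0 ≤ ∑ m, ω m * β m :=
    Finset.sum_nonneg fun m _ => mul_nonneg (hω m).le (hβ m).le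
  have hSpos : 0 < S := by rw [hSdef]; linarith
  have hTpos : 0 < T := by rw [hTdef]; linarith
  obtain ⟨c, hcdef⟩ : ∃ c : ℝ, c = T / S := ⟨_, rfl⟩
  have hcpos : 0 < c := by rw [hcdef]; positivity
  obtain ⟨y, hydef⟩ : ∃ y : Fin N → ℝ, y = fun n => τ n * T / (lam n * ω n * S) :=
    ⟨_, rfl⟩
  have hyn : ∀ n, y n = τ n * T / (lam n * ω n * S) := fun n => by rw [hydef]
  have hypos : ∀ n, 0 < y n := fun n => by
    rw [hyn n]
    exact div_pos (mul_pos (hτ n) hTpos)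
      (mul_pos (mul_pos (hlam n) (hω n)) hSpos)
  have haCEpos : ∀ n, 0 < aCE n := fun n => by
    rw [hCE n]
    exact div_pos (mul_pos (hβ n) hμ) (mul_pos (hlam n) hSpos)
  have haPBpos : ∀ n, 0 < aPB n := fun n => by
    rw [hPB n]
    exact div_pos (mul_pos (mul_pos (hω n) (hβ n)) hμ) (mul_pos (hτ n) hTpos)
  have h1 : μ - ∑ m, τ m * aCE m = μ / S := by
    have hsum1 : ∑ m, τ m * aCE m = (S - 1) * (μ / S) := by
      rw [show S - 1 = ∑ m, τ m * β m / lam m by rw [hSdef]; ring, Finset.sum_mul]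
      refine Finset.sum_congr rfl fun m _ => ?_
      rw [hCE m]
      have h1 := (hlam m).ne'
      have h2 := hSpos.ne'
      field_simp
    rw [hsum1]
    field_simp
    ring
  have h2 : μ - ∑ m, τ m * aPB m = μ / T := by
    have hsum2 : ∑ m, τ m * aPB m = (T - 1) * (μ / T) := by
      rw [show T - 1 = ∑ m, ω m * β m by rw [hTdef]; ring, Finset.sum_mul]
      refine Finset.sum_congr rfl fun m _ => ?_
      rw [hPB m]
      have h1 := (hτ m).ne'
      have h2 := hTpos.ne'
      field_simp
    rw [hsum2]
    field_simp
    ring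
  have hratio : ∀ n, aCE n / aPB n = y n := by
    intro n
    rw [hCE n, hPB n, hyn n]
    have h1 := (hβ n).ne'; have h2 := (hτ n).ne'; have h3 := (hω n).ne'
    have h4 := (hlam n).ne'; have h5 := hSpos.ne'; have h6 := hTpos.ne'
    have h7 := hμ.ne'
    field_simp
  have hlog : ∀ n, Real.log (u aCE n / u aPB n)
      = β n * Real.log (y n) + Real.log c := by
    intro n
    rw [hu aCE n, hu aPB n, h1, h2]
    have hA : (0:ℝ) < aCE n := haCEpos n
    have hB : (0:ℝ) < aPB n := haPBpos n
    have hAr : (0:ℝ) < Real.rpow (aCE n) (β n) := Real.rpow_pos_of_pos hA _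
    have hBr : (0:ℝ) < Real.rpow (aPB n) (β n) := Real.rpow_pos_of_pos hB _
    have hμS : (0:ℝ) < μ / S := by positivity
    have hμT : (0:ℝ) < μ / T := by positivity
    rw [Real.log_div (by positivity) (by positivity),
      Real.log_mul hAr.ne' hμS.ne', Real.log_mul hBr.ne' hμT.ne']
    have e1 : Real.log (Real.rpow (aCE n) (β n)) = β n * Real.log (aCE n) :=
      Real.log_rpow hA _
    have e2 : Real.log (Real.rpow (aPB n) (β n)) = β n * Real.log (aPB n) :=
      Real.log_rpow hB _
    have e3 : Real.log (y n) = Real.log (aCE n) - Real.log (aPB n) := by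
      rw [← Real.log_div hA.ne' hB.ne', hratio n]
    have e4 : Real.log c = Real.log (μ / S) - Real.log (μ / T) := by
      rw [Real.log_div hμ.ne' hSpos.ne', Real.log_div hμ.ne' hTpos.ne', hcdef,
        Real.log_div hTpos.ne' hSpos.ne']
      ring
    rw [e1, e2, e3, e4]
    ring
  have hyval : ∀ n, ω n * β n * y n = (τ n * β n / lam n) * c := by
    intro n
    rw [hyn n, hcdef]
    have h3 := (hω n).ne'; have h4 := (hlam n).ne'; have h5 := hSpos.ne'
    field_simp
  have hlinsum : (∑ n, ω n * β n * (y n - 1)) + (c - 1) = 0 := by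
    have h3 : ∑ n, ω n * β n * y n = (S - 1) * c := by
      rw [show S - 1 = ∑ m, τ m * β m / lam m by rw [hSdef]; ring, Finset.sum_mul]
      exact Finset.sum_congr rfl fun n _ => hyval n
    have h4 : ∑ n, ω n * β n * (y n - 1)
        = (∑ n, ω n * β n * y n) - (∑ n, ω n * β n) := by
      rw [← Finset.sum_sub_distrib]
      exact Finset.sum_congr rfl fun n _ => by ring
    have h5 : ∑ n, ω n * β n = T - 1 := by rw [hTdef]; ring
    have h6 : c * S = T := by rw [hcdef]; field_simp
    rw [h4, h3, h5]
    linear_combination h6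
  obtain ⟨D, hDdef⟩ : ∃ D : Fin N → ℝ,
      D = fun n => ω n * β n * ((y n - 1) - Real.log (y n)) := ⟨_, rfl⟩
  have hDn' : ∀ n, D n = ω n * β n * ((y n - 1) - Real.log (y n)) := fun n => by
    rw [hDdef]
  obtain ⟨d, hddef⟩ : ∃ d : ℝ, d = (c - 1) - Real.log c := ⟨_, rfl⟩
  have hgap : ∑ n, ω n * Real.log (u aCE n / u aPB n) = -((∑ n, D n) + d) := by
    have h7 : ∀ n, ω n * Real.log (u aCE n / u aPB n)
        = ω n * β n * (y n - 1) - D n + ω n * Real.log c := by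
      intro n; rw [hlog n, hDn' n]; ring
    rw [Finset.sum_congr rfl fun n _ => h7 n]
    rw [Finset.sum_add_distrib, Finset.sum_sub_distrib, ← Finset.sum_mul, hsum]
    rw [hddef]
    linarith [hlinsum]
  have hDnn : ∀ n ∈ Finset.univ, 0 ≤ D n := by
    intro n _
    rw [hDn' n]
    exact mul_nonneg (mul_nonneg (hω n).le (hβ n).le) (log_gap_nonneg' (hypos n))
  have hDsum : 0 ≤ ∑ n, D n := Finset.sum_nonneg hDnn
  have hdnn : 0 ≤ d := by rw [hddef]; exact log_gap_nonneg' hcpos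
  constructor
  · rw [hgap]; linarith
  constructor
  · intro h0
    rw [hgap] at h0
    have hDz : ∑ n, D n = 0 := by linarith
    have hdz : d = 0 := by linarith
    have hc1 : c = 1 := by
      rw [hddef] at hdz
      exact (log_gap_eq_zero_iff' hcpos).mp hdz
    have hST : T = S := by
      rw [hcdef] at hc1
      field_simp at hc1
      exact hc1
    have hDall := (Finset.sum_eq_zero_iff_of_nonneg hDnn).mp hDz
    intro n
    have hDnz : D n = 0 := hDall n (Finset.mem_univ n)
    rw [hDn' n] at hDnz
    have hωβ : ω n * β n ≠ 0 := (mul_pos (hω n) (hβ n)).ne'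
    have hyln : (y n - 1) - Real.log (y n) = 0 := by
      rcases mul_eq_zero.mp hDnz with h | h
      · exact absurd h hωβ
      · exact h
    have hy1 : y n = 1 := (log_gap_eq_zero_iff' (hypos n)).mp hyln
    rw [hyn n, hST] at hy1
    have hden : lam n * ω n * S ≠ 0 :=
      (mul_pos (mul_pos (hlam n) (hω n)) hSpos).ne'
    rw [div_eq_one_iff_eq hden] at hy1
    have hSne : S ≠ 0 := hSpos.ne'
    have hτeq : τ n = lam n * ω n :=
      mul_right_cancel₀ hSne (by linarith [hy1])
    rw [hτeq, mul_comm, mul_div_assoc, div_self (hlam n).ne', mul_one]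
  · intro hall
    have hST : S = T := by
      rw [hSdef, hTdef]
      congr 1
      refine Finset.sum_congr rfl fun m _ => ?_
      rw [hall m]
      ring
    have hc1 : c = 1 := by rw [hcdef, hST]; field_simp
    have hy1 : ∀ n, y n = 1 := by
      intro n
      have hτeq : lam n * ω n = τ n := by
        rw [hall n, mul_div_assoc', mul_comm, mul_div_assoc, div_self (hlam n).ne', mul_one]
      rw [hyn n, hτeq, hST]
      have h1 := (hτ n).ne'
      have h2 := hTpos.ne'
      field_simp
    rw [hgap]
    have hz : ∀ n ∈ Finset.univ, D n = 0 := by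
      intro n _
      rw [hDn' n, hy1 n]
      simp
    rw [Finset.sum_eq_zero hz, hddef, hc1]
    simp
end
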